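/- If (Y_i)_{i∈ℤ} is stationary and ergodic with E[Y_1] < s, then the queue length recursion Q_{n+1} = (Q_n - s + Y_{n+1})^+ started from any a.s. finite Q_0 ≥ 0 couples with a stationary ergodic sequence (Q'_n) satisfying Q'_0 = sup_{n≥0} V_n, where V_n = Σ_{i=0}^{n-1} Y_{-i} - ns; in particular sup_{n≥0} V_n < ∞ a.s. -/

import Mathlib

open MeasureTheory Filter Set

/-!
The queue recursion is Lindley's recursion `X (n + 1) = (X n + a n)⁺` with increments
`a n = Y (n + 1) - s`. The pointwise maximum of two solutions is again a solution, and a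
solution vanishes by the first time `X 0 + ∑_{k<n} a k ≤ 0`, since before that no truncation
happens. So if the partial sums drift to `-∞`, two nonnegative solutions vanish at a common
time and agree from then on.

Loynes' variable `sup_n V_n` is the supremum of the Birkhoff sums of `Y 0 - s` under the right
shift; where it is finite it satisfies `Q' (shiftZ z) = (Q' z + Y 1 - s)⁺`, so it solves the
same recursion along the orbit. Its finiteness and the drift of the forward sums both follow
from: for ergodic `T` and integrable `f` with `∫ f < 0`, the Birkhoff sums `S_n` are a.e.
bounded above. Indeed, with `M_N = max_{n ≤ N} S_n`, the function
`max (f, -M_N ∘ T) = M_{N+1} - M_N ∘ T` has nonnegative integral, and on the invariant set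
where the sums are unbounded it tends to `f`, dominated by `|f|`. By ergodicity that set is
null or conull, and conull would force `∫ f ≥ 0`.
-/

def shiftZ : (ℤ → ℝ) → (ℤ → ℝ) := fun z i => z (i + 1)

def IsLindley (a X : ℕ → ℝ) : Prop := ∀ n, X (n + 1) = max (X n + a n) 0

namespace IsLindley

variable {a X Y : ℕ → ℝ}

lemma nonneg (hX : IsLindley a X) (h0 : 0 ≤ X 0) (n : ℕ) : 0 ≤ X n := by
  cases n with
  | zero => exact h0
  | succ n => exact (hX n).symm ▸ le_max_right _ _

lemma sup (hX : IsLindley a X) (hY : IsLindley a Y) : IsLindley a (X ⊔ Y) := fun n => by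
  simp only [Pi.sup_apply, hX n, hY n, max_max_max_comm, max_self, max_add_add_right]

lemma eq_add_sum_of_pos (hX : IsLindley a X) {n : ℕ} (hpos : ∀ k < n, 0 < X (k + 1)) :
    X n = X 0 + ∑ k ∈ Finset.range n, a k := by
  induction n with
  | zero => simp
  | succ n ih =>
    have hstep : 0 < X n + a n := by simpa [hX n] using hpos n n.lt_succ_self
    rw [hX n, max_eq_left hstep.le, ih fun k hk => hpos k (by omega), Finset.sum_range_succ]
    ring

lemma exists_le_zero (hX : IsLindley a X) {n : ℕ}
    (hn : X 0 + ∑ k ∈ Finset.range n, a k ≤ 0) : ∃ k ≤ n, X k ≤ 0 := by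
  by_contra! hpos
  have := hX.eq_add_sum_of_pos fun k hk => hpos (k + 1) hk
  linarith [hpos n le_rfl]

lemma eq_of_le (hX : IsLindley a X) (hY : IsLindley a Y) {k n : ℕ} (hk : X k = Y k)
    (hkn : k ≤ n) : X n = Y n := by
  induction n, hkn using Nat.le_induction with
  | base => exact hk
  | succ n _ ih => rw [hX n, hY n, ih]

lemma eventually_eq (hX : IsLindley a X) (hY : IsLindley a Y) (hX0 : 0 ≤ X 0) (hY0 : 0 ≤ Y 0)
    (ha : Tendsto (fun n => ∑ k ∈ Finset.range n, a k) atTop atBot) :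
    ∀ᶠ n in atTop, X n = Y n := by
  obtain ⟨n, hn⟩ := (ha.eventually (eventually_le_atBot (-max (X 0) (Y 0)))).exists
  obtain ⟨τ, -, hτ⟩ :=
    (hX.sup hY).exists_le_zero (n := n) (by simp only [Pi.sup_apply]; linarith)
  have hXτ : X τ = 0 := le_antisymm ((le_max_left _ _).trans hτ) (hX.nonneg hX0 τ)
  have hYτ : Y τ = 0 := le_antisymm ((le_max_right _ _).trans hτ) (hY.nonneg hY0 τ)
  exact eventually_atTop.2 ⟨τ, fun n hn => hX.eq_of_le hY (hXτ.trans hYτ.symm) hn⟩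

end IsLindley

section BirkhoffSum

variable {α : Type*} {T : α → α} {f : α → ℝ}

lemma bddAbove_birkhoffSum_apply_iff {x : α} :
    BddAbove (range fun n => birkhoffSum T f n (T x)) ↔
      BddAbove (range fun n => birkhoffSum T f n x) := by
  constructor
  · rintro ⟨c, hc⟩
    refine ⟨max (f x + c) 0, forall_mem_range.2 fun n => ?_⟩
    cases n with
    | zero => simp
    | succ n => exact (birkhoffSum_succ' T f n x).symm ▸
        le_max_of_le_left (add_le_add_right (hc (mem_range_self n)) _)
  · rintro ⟨c, hc⟩
    refine ⟨c - f x, forall_mem_range.2 fun n => ?_⟩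
    have := hc (mem_range_self (n + 1))
    rw [birkhoffSum_succ'] at this
    linarith

lemma ciSup_birkhoffSum_eq {x : α} (h : BddAbove (range fun n => birkhoffSum T f n (T x))) :
    ⨆ n, birkhoffSum T f n x = max (f x + ⨆ n, birkhoffSum T f n (T x)) 0 := by
  have hx := bddAbove_birkhoffSum_apply_iff.1 h
  apply le_antisymm
  · refine ciSup_le fun n => ?_
    cases n with
    | zero => simp
    | succ n => exact (birkhoffSum_succ' T f n x).symm ▸
        le_max_of_le_left (add_le_add_right (le_ciSup h n) _)
  · refine max_le ?_ (by simpa using le_ciSup hx 0)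
    rw [← le_sub_iff_add_le']
    refine ciSup_le fun n => le_sub_iff_add_le'.2 ?_
    simpa [birkhoffSum_succ'] using le_ciSup hx (n + 1)

noncomputable def maxBirkhoffSum (T : α → α) (f : α → ℝ) : ℕ → α → ℝ
  | 0 => 0
  | N + 1 => fun x => max (f x + maxBirkhoffSum T f N (T x)) 0

lemma maxBirkhoffSum_nonneg (N : ℕ) (x : α) : 0 ≤ maxBirkhoffSum T f N x := by
  cases N with
  | zero => exact le_rfl
  | succ N => exact le_max_right _ _

lemma birkhoffSum_le_maxBirkhoffSum {n N : ℕ} (h : n ≤ N) (x : α) :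
    birkhoffSum T f n x ≤ maxBirkhoffSum T f N x := by
  induction N generalizing n x with
  | zero => simp [Nat.le_zero.1 h, maxBirkhoffSum]
  | succ N ih =>
    cases n with
    | zero => simpa using maxBirkhoffSum_nonneg (N + 1) x
    | succ n => exact (birkhoffSum_succ' T f n x).symm ▸
        le_max_of_le_left (add_le_add_right (ih (n := n) (by omega) (T x)) _)

lemma maxBirkhoffSum_le_succ (N : ℕ) (x : α) :
    maxBirkhoffSum T f N x ≤ maxBirkhoffSum T f (N + 1) x := by
  induction N generalizing x with
  | zero => exact maxBirkhoffSum_nonneg 1 x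
  | succ N ih => exact max_le_max (add_le_add_right (ih (T x)) _) le_rfl

lemma max_neg_maxBirkhoffSum_eq (N : ℕ) (x : α) :
    max (f x) (-maxBirkhoffSum T f N (T x)) =
      maxBirkhoffSum T f (N + 1) x - maxBirkhoffSum T f N (T x) := by
  simp only [maxBirkhoffSum, ← max_sub_sub_right, add_sub_cancel_right, zero_sub]

variable [MeasurableSpace α] {μ : Measure α}

lemma measurable_birkhoffSum (hT : Measurable T) (hf : Measurable f) (n : ℕ) :
    Measurable (birkhoffSum T f n) :=
  Finset.measurable_sum _ fun k _ => hf.comp (hT.iterate k)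

lemma integrable_maxBirkhoffSum (hT : MeasurePreserving T μ μ) (hf : Integrable f μ) (N : ℕ) :
    Integrable (maxBirkhoffSum T f N) μ := by
  induction N with
  | zero => exact integrable_zero _ _ _
  | succ N ih => exact (hf.add (hT.integrable_comp_of_integrable ih)).pos_part

lemma integral_max_neg_maxBirkhoffSum_nonneg (hT : MeasurePreserving T μ μ)
    (hf : Integrable f μ) (N : ℕ) :
    0 ≤ ∫ x, max (f x) (-maxBirkhoffSum T f N (T x)) ∂μ := by
  have hN := integrable_maxBirkhoffSum hT hf N
  have hN1 := integrable_maxBirkhoffSum hT hf (N + 1)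
  have hNT : Integrable (fun x => maxBirkhoffSum T f N (T x)) μ :=
    hT.integrable_comp_of_integrable hN
  have hcomp : ∫ x, maxBirkhoffSum T f N (T x) ∂μ = ∫ x, maxBirkhoffSum T f N x ∂μ := by
    have h := integral_map hT.measurable.aemeasurable
      (by rw [hT.map_eq]; exact hN.aestronglyMeasurable)
    rw [hT.map_eq] at h
    exact h.symm
  simp only [max_neg_maxBirkhoffSum_eq]
  rw [integral_sub hN1 hNT, hcomp, sub_nonneg]
  exact integral_mono hN hN1 fun x => maxBirkhoffSum_le_succ N x

theorem ae_bddAbove_birkhoffSum (hT : Ergodic T μ) (hfm : Measurable f) (hf : Integrable f μ)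
    (hneg : ∫ x, f x ∂μ < 0) :
    ∀ᵐ x ∂μ, BddAbove (range fun n => birkhoffSum T f n x) := by
  set G := {x | BddAbove (range fun n => birkhoffSum T f n x)}
  have hGm : MeasurableSet G :=
    measurableSet_bddAbove_range (measurable_birkhoffSum hT.measurable hfm)
  have hGinv : T ⁻¹' G = G := ext fun x => bddAbove_birkhoffSum_apply_iff
  refine (hT.ae_mem_or_ae_notMem hGm hGinv).resolve_right fun hunb => hneg.not_ge ?_
  have hlim : ∀ᵐ x ∂μ, Tendsto (fun N => max (f x) (-maxBirkhoffSum T f N (T x))) atTop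
      (nhds (f x)) := by
    filter_upwards [hunb] with x hx
    obtain ⟨_, ⟨n, rfl⟩, hn⟩ :=
      not_bddAbove_iff.1 (mt bddAbove_birkhoffSum_apply_iff.1 hx) (-f x)
    refine tendsto_const_nhds.congr' (eventually_atTop.2 ⟨n, fun N hN => ?_⟩)
    have := birkhoffSum_le_maxBirkhoffSum (T := T) (f := f) hN (T x)
    exact (max_eq_left (by simp only at hn; linarith)).symm
  have hbound : ∀ N x, ‖max (f x) (-maxBirkhoffSum T f N (T x))‖ ≤ |f x| := fun N x => by
    rw [Real.norm_eq_abs, abs_le]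
    exact ⟨(neg_abs_le _).trans (le_max_left _ _), max_le (le_abs_self _)
      (by linarith [abs_nonneg (f x), maxBirkhoffSum_nonneg (T := T) (f := f) N (T x)])⟩
  refine ge_of_tendsto' (tendsto_integral_of_dominated_convergence _ (fun N => ?_) hf.abs
    (fun N => ae_of_all _ (hbound N)) hlim) (integral_max_neg_maxBirkhoffSum_nonneg
      hT.toMeasurePreserving hf)
  simp only [max_neg_maxBirkhoffSum_eq]
  exact ((integrable_maxBirkhoffSum hT.toMeasurePreserving hf (N + 1)).sub
    (hT.toMeasurePreserving.integrable_comp_of_integrable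
      (integrable_maxBirkhoffSum hT.toMeasurePreserving hf N))).aestronglyMeasurable

theorem ae_tendsto_birkhoffSum_atBot [IsProbabilityMeasure μ] (hT : Ergodic T μ)
    (hfm : Measurable f) (hf : Integrable f μ) (hneg : ∫ x, f x ∂μ < 0) :
    ∀ᵐ x ∂μ, Tendsto (fun n => birkhoffSum T f n x) atTop atBot := by
  set ε := -(∫ x, f x ∂μ) / 2
  have hε : 0 < ε := by simp only [ε]; linarith
  have hneg' : ∫ x, (f x + ε) ∂μ < 0 := by
    rw [integral_add hf (integrable_const ε)]
    simp only [integral_const, probReal_univ, one_smul, ε]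
    linarith
  filter_upwards [ae_bddAbove_birkhoffSum hT (hfm.add_const ε) (hf.add (integrable_const ε))
    hneg'] with x ⟨b, hb⟩
  refine tendsto_atBot_mono (fun n => ?_) (tendsto_atBot_add_const_left _ b
    (tendsto_neg_atTop_atBot.comp (tendsto_natCast_atTop_atTop.atTop_mul_const hε)))
  have := hb (mem_range_self n)
  simp only [birkhoffSum, Finset.sum_add_distrib, Finset.sum_const, Finset.card_range,
    nsmul_eq_mul] at this
  simp only [Function.comp_apply, birkhoffSum]
  linarith

end BirkhoffSum

def shiftZEquiv : (ℤ → ℝ) ≃ᵐ (ℤ → ℝ) where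
  toFun := shiftZ
  invFun z i := z (i - 1)
  left_inv z := funext fun i => by simp [shiftZ]
  right_inv z := funext fun i => by simp [shiftZ]
  measurable_toFun := measurable_pi_lambda _ fun i => measurable_pi_apply (i + 1)
  measurable_invFun := measurable_pi_lambda _ fun i => measurable_pi_apply (i - 1)

@[simp]
lemma shiftZEquiv_symm_apply (z : ℤ → ℝ) (i : ℤ) : shiftZEquiv.symm z i = z (i - 1) := rfl

@[simp]
lemma shiftZEquiv_symm_shiftZ (z : ℤ → ℝ) : shiftZEquiv.symm (shiftZ z) = z :=
  shiftZEquiv.symm_apply_apply z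

lemma iterate_shiftZ_apply (k : ℕ) (z : ℤ → ℝ) (i : ℤ) : shiftZ^[k] z i = z (i + k) := by
  induction k generalizing i with
  | zero => simp
  | succ k ih =>
    rw [Function.iterate_succ_apply', shiftZ, ih]
    congr 1
    push_cast
    ring

lemma iterate_shiftZEquiv_symm_apply (k : ℕ) (z : ℤ → ℝ) (i : ℤ) :
    (⇑shiftZEquiv.symm)^[k] z i = z (i - k) := by
  induction k generalizing i with
  | zero => simp
  | succ k ih =>
    rw [Function.iterate_succ_apply']
    show (⇑shiftZEquiv.symm)^[k] z (i - 1) = _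
    rw [ih]
    congr 1
    push_cast
    ring

noncomputable def loynesSup (s : ℝ) (z : ℤ → ℝ) : ℝ :=
  ⨆ n, birkhoffSum shiftZEquiv.symm (fun w => w 0 - s) n z

lemma measurable_loynesSup (s : ℝ) : Measurable (loynesSup s) :=
  .iSup fun n => measurable_birkhoffSum shiftZEquiv.symm.measurable
    ((measurable_pi_apply 0).sub_const s) n

section Loynes

variable {s : ℝ} {z : ℤ → ℝ}
  (hz : BddAbove (range fun n => birkhoffSum shiftZEquiv.symm (fun w => w 0 - s) n z))
include hz

lemma loynesSup_nonneg : 0 ≤ loynesSup s z := by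
  simpa [loynesSup] using le_ciSup hz 0

lemma isLindley_loynesSup :
    IsLindley (fun n => z (n + 1) - s) (fun n => loynesSup s (shiftZ^[n] z)) := by
  have hbdd : ∀ n, BddAbove (range fun m =>
      birkhoffSum shiftZEquiv.symm (fun w => w 0 - s) m (shiftZ^[n] z)) := by
    intro n
    induction n with
    | zero => exact hz
    | succ n ih =>
      rw [Function.iterate_succ_apply', ← bddAbove_birkhoffSum_apply_iff]
      simpa using ih
  intro n
  have hstep : shiftZ (shiftZ^[n] z) 0 = z (n + 1) := by
    rw [shiftZ, iterate_shiftZ_apply, zero_add, add_comm]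
  simp only [loynesSup, Function.iterate_succ_apply']
  rw [ciSup_birkhoffSum_eq (by simpa using hbdd n), shiftZEquiv_symm_shiftZ, hstep, add_comm]

end Loynes

theorem stmt_6_general (μ : Measure (ℤ → ℝ)) [IsProbabilityMeasure μ]
    (hshift : Ergodic shiftZ μ)
    (hint : Integrable (fun z : ℤ → ℝ => z 1) μ)
    (s : ℝ) (hmean : (∫ z : ℤ → ℝ, z 1 ∂μ) < s)
    (Q : ℕ → (ℤ → ℝ) → ℝ)
    (hQ0 : ∀ᵐ z ∂μ, 0 ≤ Q 0 z)
    (hQ : ∀ n z, Q (n + 1) z = max (Q n z - s + z ((n : ℤ) + 1)) 0)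
    (V : ℕ → (ℤ → ℝ) → ℝ)
    (hV : ∀ n z, V n z = (∑ i ∈ Finset.range n, z (-(i : ℤ))) - n * s) :
    ∃ Q' : (ℤ → ℝ) → ℝ, Measurable Q' ∧
      ∀ᵐ z ∂μ, BddAbove (Set.range fun n => V n z) ∧
        Q' z = (⨆ n, V n z) ∧
        ∃ τ : ℕ, ∀ n, τ < n → Q n z = Q' (shiftZ^[n] z) := by
  have hsymm : Ergodic shiftZEquiv.symm μ := Ergodic.symm (e := shiftZEquiv) hshift
  have hint0 : Integrable (fun z : ℤ → ℝ => z 0) μ := by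
    simpa [Function.comp_def] using hsymm.toMeasurePreserving.integrable_comp_of_integrable hint
  have hmean0 : ∫ z, (z 0 - s) ∂μ < 0 := by
    have h := hsymm.toMeasurePreserving.integral_comp' (fun z => z 1)
    simp only [shiftZEquiv_symm_apply, sub_self] at h
    rw [integral_sub hint0 (integrable_const s), h]
    simpa using hmean
  have hmean1 : ∫ z, (z 1 - s) ∂μ < 0 := by
    rw [integral_sub hint (integrable_const s)]
    simpa using hmean
  have hVeq : ∀ n z, V n z = birkhoffSum shiftZEquiv.symm (fun w => w 0 - s) n z :=
    fun n z => by simp [hV, birkhoffSum, iterate_shiftZEquiv_symm_apply]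
  refine ⟨loynesSup s, measurable_loynesSup s, ?_⟩
  filter_upwards [hQ0, ae_bddAbove_birkhoffSum hsymm ((measurable_pi_apply 0).sub_const s)
      (hint0.sub (integrable_const s)) hmean0,
    ae_tendsto_birkhoffSum_atBot hshift ((measurable_pi_apply 1).sub_const s)
      (hint.sub (integrable_const s)) hmean1] with z hQz hbdd hdrift
  simp only [hVeq]
  refine ⟨hbdd, rfl, ?_⟩
  have hQl : IsLindley (fun n => z (n + 1) - s) (Q · z) := fun n => by
    simp only [hQ, sub_add_eq_add_sub, add_sub_assoc]
  have hdrift' : Tendsto (fun n => ∑ k ∈ Finset.range n, (z (k + 1) - s)) atTop atBot := by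
    simpa [birkhoffSum, iterate_shiftZ_apply, add_comm] using hdrift
  obtain ⟨τ, hτ⟩ := eventually_atTop.1 (hQl.eventually_eq (isLindley_loynesSup hbdd) hQz
    (loynesSup_nonneg hbdd) hdrift')
  exact ⟨τ, fun n hn => hτ n hn.le⟩

/-- Loynes' theorem for the queue length: if the arrivals `(Y_i)` (coordinate
process on the canonical space with ergodic shift-invariant probability `μ`)
are nonnegative with `E[Y 1] < s`, then the queue recursion
`Q_{n+1} = (Q_n - s + Y_{n+1})⁺` started from any a.s. finite `Q 0 ≥ 0`
couples with the stationary ergodic sequence `Q'_n = Q' ∘ shiftZ^[n]` where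
`Q' = sup_{n ≥ 0} V_n`, `V_n = ∑_{i=0}^{n-1} Y_{-i} - n s`; in particular
`sup_n V_n < ∞` a.s. -/
theorem stmt_6 (μ : Measure (ℤ → ℝ)) [IsProbabilityMeasure μ]
    (hshift : Ergodic shiftZ μ)
    (hnonneg : ∀ᵐ z ∂μ, ∀ i, 0 ≤ z i)
    (hint : Integrable (fun z : ℤ → ℝ => z 1) μ)
    (s : ℝ) (hs : 0 < s) (hmean : (∫ z : ℤ → ℝ, z 1 ∂μ) < s)
    (Q : ℕ → (ℤ → ℝ) → ℝ)
    (hQ0 : ∀ᵐ z ∂μ, 0 ≤ Q 0 z)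
    (hQ : ∀ n z, Q (n + 1) z = max (Q n z - s + z ((n : ℤ) + 1)) 0)
    (V : ℕ → (ℤ → ℝ) → ℝ)
    (hV : ∀ n z, V n z = (∑ i ∈ Finset.range n, z (-(i : ℤ))) - n * s) :
    ∃ Q' : (ℤ → ℝ) → ℝ, Measurable Q' ∧
      ∀ᵐ z ∂μ, BddAbove (Set.range fun n => V n z) ∧
        Q' z = (⨆ n, V n z) ∧
        ∃ τ : ℕ, ∀ n, τ < n → Q n z = Q' (shiftZ^[n] z) :=
  stmt_6_general μ hshift hint s hmean Q hQ0 hQ V hV
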